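/- arXiv:2202.09866 — 5 statements merged into one kernel-verified Lean document; each statement's English description precedes it below -/
import Mathlib

section
/- Let q be a prime power, n a positive integer, and for each positive integer r let t_r = gcd(q^r - 1, n). Let v_d denote the number of distinct monic irreducible factors of degree d of x^n - 1 over F_q. Then v_d = (1/d) * sum over r dividing d of t_r * μ(d/r), where μ is the Möbius function. -/
/-!
In an algebraic closure of `F`, the `n`-th roots of unity fixed by `x ↦ x ^ q ^ r` are the
`gcd (q ^ r - 1) n`-th roots of unity, and there are exactly `t_r = gcd (q ^ r - 1) n` of
them since the characteristic does not divide `t_r`. On the other hand `x ^ q ^ r = x` iff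
the degree of the minimal polynomial of `x` divides `r`, and each monic irreducible factor of
`X ^ n - 1` of degree `e` has exactly `e` roots, all distinct because finite fields are
perfect. Hence `t_r = ∑_{e ∣ r} e * v_e`, and Möbius inversion gives
`d * v_d = ∑_{r ∣ d} μ (d / r) * t_r`.
-/

open Polynomial Finset

open scoped Classical

def monicIrreducibleFactorsOfDegree {F : Type*} [Field F] (f : F[X]) (d : ℕ) : Set F[X] :=
  {g | g.Monic ∧ Irreducible g ∧ g.natDegree = d ∧ g ∣ f}

theorem filter_pow_succ_eq_self_nthRootsFinset {R : Type*} [CommRing R] [IsDomain R] {n : ℕ}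
    (hn : 0 < n) (m : ℕ) :
    {x ∈ nthRootsFinset n (1 : R) | x ^ (m + 1) = x} = nthRootsFinset (m.gcd n) (1 : R) := by
  ext x
  rw [mem_filter, mem_nthRootsFinset hn, mem_nthRootsFinset (Nat.gcd_pos_of_pos_right m hn),
    pow_gcd_eq_one, pow_succ, mul_left_eq_self₀, and_comm]
  refine and_congr_left fun hxn => or_iff_left fun hx => ?_
  simp [hx, zero_pow hn.ne'] at hxn

theorem IsAlgClosed.card_nthRootsFinset_one {K : Type*} [Field K] [IsAlgClosed K] {m : ℕ}
    (hm : (m : K) ≠ 0) : #(nthRootsFinset m (1 : K)) = m := by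
  have : NeZero (m : K) := ⟨hm⟩
  obtain ⟨ζ, hζ⟩ := HasEnoughRootsOfUnity.exists_primitiveRoot K m
  exact hζ.card_nthRootsFinset

section

variable {F K : Type*} [Field F] [Field K] [Algebra F K]

theorem pow_card_pow_eq_self_iff_natDegree_minpoly_dvd [Fintype F] {x : K} (hx : IsIntegral F x)
    (r : ℕ) :
    x ^ Fintype.card F ^ r = x ↔ (minpoly F x).natDegree ∣ r := by
  rw [(minpoly.irreducible hx).natDegree_dvd_iff_dvd_X_pow_card_pow_sub_X, minpoly.dvd_iff,
    Nat.card_eq_fintype_card]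
  simp [sub_eq_zero]

theorem natCast_ne_zero_of_dvd_card_pow_sub_one [Fintype F] {m r : ℕ} (hr : r ≠ 0)
    (hm : m ∣ Fintype.card F ^ r - 1) : (m : K) ≠ 0 := by
  intro h
  obtain ⟨k, hk⟩ := hm
  have hq : (Fintype.card F : K) = 0 := by
    rw [← map_natCast (algebraMap F K), FiniteField.cast_card_eq_zero, map_zero]
  have : ((Fintype.card F ^ r - 1 : ℕ) : K) = 0 := by rw [hk, Nat.cast_mul, h, zero_mul]
  rw [Nat.cast_sub (Nat.one_le_pow _ _ Fintype.card_pos), Nat.cast_pow, hq, zero_pow hr] at this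
  simp at this

theorem aroots_X_pow_sub_one_toFinset {n : ℕ} (hn : 0 < n) :
    ((X ^ n - 1 : F[X]).aroots K).toFinset = nthRootsFinset n (1 : K) := by
  ext x
  rw [Multiset.mem_toFinset, mem_aroots, mem_nthRootsFinset hn,
    and_iff_right (by simpa using X_pow_sub_C_ne_zero hn (1 : F))]
  simp [sub_eq_zero]

variable [IsAlgClosed K]

theorem card_aroots_toFinset_of_irreducible [PerfectField F] {g : F[X]} (hg : Irreducible g) :
    #(g.aroots K).toFinset = g.natDegree := by
  rw [Multiset.toFinset_card_of_nodup (nodup_roots (PerfectField.separable_of_irreducible hg).map),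
    ← (IsAlgClosed.splits _).natDegree_eq_card_roots, natDegree_map]

theorem card_filter_minpoly_eq [PerfectField F] {g : F[X]} (hm : g.Monic) (hg : Irreducible g)
    {s : Finset K} (hs : ∀ x, aeval x g = 0 → x ∈ s) :
    #{x ∈ s | minpoly F x = g} = g.natDegree := by
  rw [← card_aroots_toFinset_of_irreducible (K := K) hg]
  congr 1
  ext x
  rw [mem_filter, Multiset.mem_toFinset, mem_aroots, and_iff_right hm.ne_zero]
  constructor
  · rintro ⟨-, rfl⟩
    exact minpoly.aeval F x
  · intro hx
    exact ⟨hs x hx, (minpoly.eq_of_irreducible_of_monic hg hx hm).symm⟩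

theorem coe_image_minpoly_filter_natDegree {f : F[X]} (hf : f ≠ 0) (d : ℕ) :
    (({x ∈ (f.aroots K).toFinset | (minpoly F x).natDegree = d}.image (minpoly F) : Finset F[X]) :
      Set F[X]) = monicIrreducibleFactorsOfDegree f d := by
  ext g
  simp only [coe_image, coe_filter, Multiset.mem_toFinset, mem_aroots, Set.mem_image,
    Set.mem_ofPred_eq, monicIrreducibleFactorsOfDegree]
  constructor
  · rintro ⟨x, ⟨⟨-, hx⟩, rfl⟩, rfl⟩
    have hint : IsIntegral F x := (isAlgebraic_iff_isIntegral.mp ⟨f, hf, hx⟩)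
    exact ⟨minpoly.monic hint, minpoly.irreducible hint, rfl, minpoly.dvd F x hx⟩
  · rintro ⟨hm, hg, rfl, hgf⟩
    obtain ⟨x, hx⟩ := IsAlgClosed.exists_aeval_eq_zero K g (degree_pos_of_irreducible hg).ne'
    have hmin := (minpoly.eq_of_irreducible_of_monic hg hx hm).symm
    exact ⟨x, ⟨⟨hf, aeval_eq_zero_of_dvd_aeval_eq_zero hgf hx⟩, by rw [hmin]⟩, hmin⟩

theorem card_filter_natDegree_minpoly_eq [PerfectField F] {f : F[X]} (hf : f ≠ 0) (d : ℕ) :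
    #{x ∈ (f.aroots K).toFinset | (minpoly F x).natDegree = d} =
      d * (monicIrreducibleFactorsOfDegree f d).ncard := by
  set T := {x ∈ (f.aroots K).toFinset | (minpoly F x).natDegree = d}
  have hfactors := coe_image_minpoly_filter_natDegree (K := K) hf d
  have hfiber : ∀ g ∈ T.image (minpoly F), #{x ∈ T | minpoly F x = g} = d := by
    intro g hg
    obtain ⟨hm, hirr, rfl, hgf⟩ : g ∈ monicIrreducibleFactorsOfDegree f d := hfactors ▸ hg
    refine card_filter_minpoly_eq hm hirr fun x hx => ?_
    rw [mem_filter, Multiset.mem_toFinset, mem_aroots,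
      minpoly.eq_of_irreducible_of_monic hirr hx hm]
    exact ⟨⟨hf, aeval_eq_zero_of_dvd_aeval_eq_zero hgf hx⟩, rfl⟩
  rw [card_eq_sum_card_image (minpoly F) T, sum_congr rfl hfiber, sum_const, smul_eq_mul,
    mul_comm, ← hfactors, Set.ncard_coe_finset]

theorem card_filter_pow_card_pow_eq_self_aroots [Fintype F] {f : F[X]} (hf : f ≠ 0) {r : ℕ}
    (hr : r ≠ 0) :
    #{x ∈ (f.aroots K).toFinset | x ^ Fintype.card F ^ r = x} =
      ∑ e ∈ r.divisors, e * (monicIrreducibleFactorsOfDegree f e).ncard := by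
  set S := {x ∈ (f.aroots K).toFinset | x ^ Fintype.card F ^ r = x}
  have hint : ∀ x ∈ (f.aroots K).toFinset, IsIntegral F x := fun x hx => by
    rw [Multiset.mem_toFinset, mem_aroots] at hx
    exact isAlgebraic_iff_isIntegral.mp ⟨f, hx.1, hx.2⟩
  have hmaps : (S : Set K).MapsTo (fun x => (minpoly F x).natDegree) r.divisors := by
    intro x hx
    rw [coe_filter, Set.mem_ofPred_eq] at hx
    exact Nat.mem_divisors.mpr
      ⟨(pow_card_pow_eq_self_iff_natDegree_minpoly_dvd (hint x hx.1) r).mp hx.2, hr⟩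
  rw [card_eq_sum_card_fiberwise hmaps]
  refine sum_congr rfl fun e he => ?_
  rw [filter_filter, ← card_filter_natDegree_minpoly_eq (K := K) hf e]
  congr 1
  refine filter_congr fun x hx => ?_
  rw [pow_card_pow_eq_self_iff_natDegree_minpoly_dvd (hint x hx) r]
  exact ⟨And.right, fun h => ⟨h ▸ Nat.dvd_of_mem_divisors he, h⟩⟩

theorem card_filter_pow_card_pow_eq_self_nthRootsFinset [Fintype F] {n r : ℕ} (hn : 0 < n)
    (hr : r ≠ 0) :
    #{x ∈ nthRootsFinset n (1 : K) | x ^ Fintype.card F ^ r = x} =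
      (Fintype.card F ^ r - 1).gcd n := by
  have h := filter_pow_succ_eq_self_nthRootsFinset (R := K) hn (Fintype.card F ^ r - 1)
  rw [Nat.sub_add_cancel (Nat.one_le_pow _ _ Fintype.card_pos)] at h
  rw [h, IsAlgClosed.card_nthRootsFinset_one
    (natCast_ne_zero_of_dvd_card_pow_sub_one (F := F) hr (Nat.gcd_dvd_left _ _))]

end

/-- The number of distinct monic irreducible degree-`d` factors of `X^n - 1` over `F_q`
is `(1/d) * ∑_{r ∣ d} gcd(q^r - 1, n) * μ(d/r)`. -/
theorem stmt0 (F : Type*) [Field F] [Fintype F] (q n d : ℕ)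
    (hq : Fintype.card F = q) (hn : 0 < n) (hd : 0 < d) :
    (({g : F[X] | g.Monic ∧ Irreducible g ∧ g.natDegree = d ∧ g ∣ X ^ n - 1}).ncard : ℚ) =
      (1 / (d : ℚ)) * ∑ r ∈ d.divisors,
        ((Nat.gcd (q ^ r - 1) n : ℚ) * ((ArithmeticFunction.moebius (d / r) : ℤ) : ℚ)) := by
  subst hq
  change ((monicIrreducibleFactorsOfDegree (X ^ n - 1 : F[X]) d).ncard : ℚ) = _
  have hf : (X ^ n - 1 : F[X]) ≠ 0 := X_pow_sub_C_ne_zero hn 1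
  have hsum : ∀ r > 0, ∑ e ∈ r.divisors,
      (e * (monicIrreducibleFactorsOfDegree (X ^ n - 1 : F[X]) e).ncard : ℚ) =
        (Fintype.card F ^ r - 1).gcd n := fun r hr => by
    have h := card_filter_pow_card_pow_eq_self_aroots (K := AlgebraicClosure F) hf hr.ne'
    rw [aroots_X_pow_sub_one_toFinset hn,
      card_filter_pow_card_pow_eq_self_nthRootsFinset hn hr.ne'] at h
    exact_mod_cast h.symm
  have hinv := ArithmeticFunction.sum_eq_iff_sum_mul_moebius_eq.mp hsum d hd
  rw [Nat.sum_divisorsAntidiagonal' (f := fun a b =>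
    ((ArithmeticFunction.moebius a : ℤ) : ℚ) * ((Fintype.card F ^ b - 1).gcd n : ℚ))] at hinv
  rw [sum_congr rfl fun r _ => mul_comm _ _, hinv, one_div, inv_mul_cancel_left₀ (by positivity)]
end

section
/- Let q be a power of a prime p, n = p^s * n_0 with gcd(n_0, p) = 1, and let d be the least positive integer with n_0 dividing q^d - 1. Then the number of distinct monic irreducible factors of x^n - 1 over F_q equals (1/d) * sum over r dividing d of gcd(q^r - 1, n) * φ(d/r), where φ is Euler's totient function. -/
/-!
Since `X ^ (p ^ s * n₀) - 1 = (X ^ n₀ - 1) ^ p ^ s` in characteristic `p`, only `X ^ n₀ - 1`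
matters. Adjoining to `F` a root of an irreducible factor of the `n₀`-th cyclotomic polynomial gives
an extension `L` of degree `d` containing a primitive `n₀`-th root of unity, so `X ^ n₀ - 1` splits
in `L` and its monic irreducible factors are the Galois orbits of its roots. The group `Gal(L/F)` is
cyclic of order `d`, generated by `x ↦ x ^ q`, whose `k`-th power fixes exactly the
`gcd (q ^ k - 1, n₀)` roots of unity of order dividing `q ^ k - 1`; Burnside's lemma counts the
orbits. As `n₀ ∣ q ^ d - 1` and `gcd (q ^ a - 1, q ^ b - 1) = q ^ gcd (a, b) - 1`, that count only
depends on `gcd (k, d)`, and grouping the `k < d` accordingly yields the divisor sum.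
-/

open Polynomial

theorem Nat.sum_range_gcd_eq_sum_divisors {M : Type*} [AddCommMonoid M] (n : ℕ) (f : ℕ → M) :
    ∑ k ∈ Finset.range n, f (n.gcd k) = ∑ r ∈ n.divisors, (n / r).totient • f r := by
  rcases n.eq_zero_or_pos with rfl | hn
  · simp
  rw [← Finset.sum_fiberwise_of_maps_to (g := n.gcd) (t := n.divisors)
    fun k _ => Nat.mem_divisors.mpr ⟨Nat.gcd_dvd_left n k, hn.ne'⟩]
  refine Finset.sum_congr rfl fun r hr => ?_
  rw [Finset.sum_congr rfl fun k hk => congrArg f (Finset.mem_filter.mp hk).2,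
    Finset.sum_const, Nat.totient_div_of_dvd (Nat.dvd_of_mem_divisors hr)]

theorem Nat.sum_range_gcd_pow_sub_one_eq_sum_divisors {q n d : ℕ} (hdvd : n ∣ q ^ d - 1) :
    ∑ k ∈ Finset.range d, (q ^ k - 1).gcd n =
      ∑ r ∈ d.divisors, (d / r).totient * (q ^ r - 1).gcd n := by
  have hperiodic (k : ℕ) : (q ^ k - 1).gcd n = (q ^ d.gcd k - 1).gcd n := by
    conv_lhs => rw [← Nat.gcd_eq_right hdvd, ← Nat.gcd_assoc, Nat.pow_sub_one_gcd_pow_sub_one,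
      Nat.gcd_comm k]
  rw [Finset.sum_congr rfl fun k _ => hperiodic k]
  exact Nat.sum_range_gcd_eq_sum_divisors d fun r => (q ^ r - 1).gcd n

theorem Nat.gcd_pow_sub_one_prime_pow_mul {p q r : ℕ} (hp : p.Prime) (hpq : p ∣ q) (hq : 0 < q)
    (hr : r ≠ 0) (s m : ℕ) : (q ^ r - 1).gcd (p ^ s * m) = (q ^ r - 1).gcd m := by
  refine Nat.Coprime.gcd_mul_left_cancel_right m (Nat.Coprime.pow_left s ?_)
  rw [hp.coprime_iff_not_dvd]
  intro hp1
  have hqr : p ∣ q ^ r := hpq.trans (dvd_pow_self q hr)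
  have hp_one : p ∣ 1 := by
    simpa [Nat.sub_sub_self (Nat.one_le_pow r q hq)] using Nat.dvd_sub hqr hp1
  exact hp.one_lt.ne' (Nat.eq_one_of_dvd_one hp_one)

theorem ZMod.unitOfCoprime_pow_eq_one_iff {q n : ℕ} (h : q.Coprime n) (hq : 0 < q) (e : ℕ) :
    ZMod.unitOfCoprime q h ^ e = 1 ↔ n ∣ q ^ e - 1 := by
  rw [Units.ext_iff, Units.val_pow_eq_pow_val, ZMod.coe_unitOfCoprime, Units.val_one,
    ← Nat.cast_pow, ← sub_eq_zero, ← Nat.cast_one, ← Nat.cast_sub (Nat.one_le_pow _ _ hq),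
    ZMod.natCast_eq_zero_iff]

theorem ZMod.orderOf_unitOfCoprime_eq {q n d : ℕ} (h : q.Coprime n) (hq : 0 < q)
    (hd : 0 < d ∧ n ∣ q ^ d - 1 ∧ ∀ e, 0 < e → n ∣ q ^ e - 1 → d ≤ e) :
    orderOf (ZMod.unitOfCoprime q h) = d := by
  simp only [orderOf_eq_iff hd.1, Ne, ZMod.unitOfCoprime_pow_eq_one_iff h hq]
  exact ⟨hd.2.1, fun e he he0 hdvd => (hd.2.2 e he0 hdvd).not_gt he⟩

theorem setOf_monic_irreducible_dvd_X_pow_char_pow_mul_sub_one {F : Type*} [Field F] (p : ℕ)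
    [Fact p.Prime] [CharP F p] (s n : ℕ) :
    {g : F[X] | g.Monic ∧ Irreducible g ∧ g ∣ X ^ (p ^ s * n) - 1} =
      {g : F[X] | g.Monic ∧ Irreducible g ∧ g ∣ X ^ n - 1} := by
  have hpow : (X ^ (p ^ s * n) - 1 : F[X]) = (X ^ n - 1) ^ p ^ s := by
    rw [sub_pow_char_pow, one_pow, ← pow_mul, mul_comm]
  ext g
  simp only [Set.mem_ofPred_eq, hpow, and_congr_right_iff]
  intro _ hirr
  exact hirr.prime.dvd_pow_iff_dvd (pow_ne_zero s (Fact.out : p.Prime).ne_zero)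

theorem mem_rootSet_X_pow_sub_one {F L : Type*} [Field F] [Field L] [Algebra F L] {n : ℕ}
    (hn : 0 < n) {x : L} : x ∈ (X ^ n - 1 : F[X]).rootSet L ↔ x ^ n = 1 := by
  rw [← C_1, mem_rootSet_of_ne (X_pow_sub_C_ne_zero hn 1)]
  simp [sub_eq_zero]

theorem ncard_monic_irreducible_dvd_eq_card_orbits {F L : Type*} [Field F] [Field L]
    [Algebra F L] [Normal F L] {P : F[X]} (hP : P ≠ 0)
    (hsplit : (P.map (algebraMap F L)).Splits) :
    {g : F[X] | g.Monic ∧ Irreducible g ∧ g ∣ P}.ncard =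
      Nat.card (MulAction.orbitRel.Quotient Gal(L/F) (P.rootSet L)) := by
  let Ψ : MulAction.orbitRel.Quotient Gal(L/F) (P.rootSet L) → F[X] :=
    Quotient.lift (fun x => minpoly F (x : L)) fun x y ⟨σ, hσ⟩ => by
      rw [← hσ]
      exact minpoly.algEquiv_eq σ (y : L)
  have hΨ : Function.Injective Ψ := by
    rintro ⟨x⟩ ⟨y⟩ h
    obtain ⟨σ, hσ⟩ := (Normal.minpoly_eq_iff_mem_orbit L).mp h
    exact Quotient.sound ⟨σ, Subtype.ext hσ⟩
  have hrange : Set.range Ψ = {g : F[X] | g.Monic ∧ Irreducible g ∧ g ∣ P} := by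
    ext g
    constructor
    · rintro ⟨⟨x⟩, rfl⟩
      have hint : IsIntegral F (x : L) := Algebra.IsIntegral.isIntegral _
      exact ⟨minpoly.monic hint, minpoly.irreducible hint,
        minpoly.dvd F _ (mem_rootSet.mp x.2).2⟩
    · rintro ⟨hmonic, hirr, hdvd⟩
      have hgsplit : (g.map (algebraMap F L)).Splits :=
        hsplit.of_dvd (map_ne_zero hP) (Polynomial.map_dvd _ hdvd)
      obtain ⟨x, hx⟩ := hgsplit.exists_eval_eq_zero
        (by rw [degree_map]; exact (degree_pos_of_irreducible hirr).ne')
      have hgx : aeval x g = 0 := by rwa [aeval_def, eval₂_eq_eval_map]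
      refine ⟨⟦⟨x, mem_rootSet.mpr ⟨hP, ?_⟩⟩⟧, ?_⟩
      · obtain ⟨h, rfl⟩ := hdvd
        rw [map_mul, hgx, zero_mul]
      · exact (minpoly.eq_of_irreducible_of_monic hirr hgx hmonic).symm
  rw [← hrange, ← Nat.card_coe_set_eq, Nat.card_range_of_injective hΨ]

section FiniteField

open FiniteField

variable {F L : Type*} [Field F] [Fintype F] [Field L] [Algebra F L]

theorem frobeniusAlgEquivOfAlgebraic_pow_apply [Algebra.IsAlgebraic F L] (k : ℕ) (x : L) :
    (frobeniusAlgEquivOfAlgebraic F L ^ k) x = x ^ Fintype.card F ^ k := by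
  rw [AlgEquiv.coe_pow, coe_frobeniusAlgEquivOfAlgebraic_iterate]

theorem card_fixedBy_frobeniusAlgEquivOfAlgebraic_pow [Algebra.IsAlgebraic F L] {n : ℕ} {ζ : L}
    (hζ : IsPrimitiveRoot ζ n) (hn : 0 < n) (k : ℕ) :
    Nat.card (MulAction.fixedBy ((X ^ n - 1 : F[X]).rootSet L)
      (frobeniusAlgEquivOfAlgebraic F L ^ k)) = (Fintype.card F ^ k - 1).gcd n := by
  have hg : 0 < (Fintype.card F ^ k - 1).gcd n := Nat.gcd_pos_of_pos_right _ hn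
  have himage : Subtype.val '' MulAction.fixedBy ((X ^ n - 1 : F[X]).rootSet L)
      (frobeniusAlgEquivOfAlgebraic F L ^ k) =
        (nthRootsFinset ((Fintype.card F ^ k - 1).gcd n) (1 : L) : Set L) := by
    ext x
    have hfix_iff (hxn : x ^ n = 1) :
        x ^ Fintype.card F ^ k = x ↔ x ^ (Fintype.card F ^ k - 1) = 1 := by
      rw [← pow_sub_one_mul (pow_ne_zero k Fintype.card_ne_zero), mul_eq_right₀]
      rintro rfl
      simp [hn.ne'] at hxn
    simp only [Set.mem_image, MulAction.mem_fixedBy, Subtype.ext_iff, rootSet.coe_smul,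
      AlgEquiv.smul_def, frobeniusAlgEquivOfAlgebraic_pow_apply, Subtype.exists,
      mem_rootSet_X_pow_sub_one hn, exists_and_right, exists_eq_right, Finset.mem_coe,
      mem_nthRootsFinset hg]
    rw [exists_prop, pow_gcd_eq_one]
    exact ⟨fun ⟨hxn, h⟩ => ⟨(hfix_iff hxn).mp h, hxn⟩,
      fun ⟨h, hxn⟩ => ⟨hxn, (hfix_iff hxn).mpr h⟩⟩
  rw [← Nat.card_image_of_injective Subtype.val_injective, himage, Nat.card_coe_set_eq,
    Set.ncard_coe_finset,
    (hζ.pow hn (Nat.div_mul_cancel (Nat.gcd_dvd_right _ n)).symm).card_nthRootsFinset]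

theorem ncard_monic_irreducible_dvd_X_pow_sub_one_mul_finrank [Finite L] {n : ℕ} {ζ : L}
    (hζ : IsPrimitiveRoot ζ n) (hn : 0 < n) :
    {g : F[X] | g.Monic ∧ Irreducible g ∧ g ∣ X ^ n - 1}.ncard * Module.finrank F L =
      ∑ k ∈ Finset.range (Module.finrank F L), (Fintype.card F ^ k - 1).gcd n := by
  classical
  have hsplit : ((X ^ n - 1 : F[X]).map (algebraMap F L)).Splits := by
    simpa using X_pow_sub_one_splits hζ
  have hburnside := MulAction.sum_card_fixedBy_eq_card_orbits_mul_card_group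
    Gal(L/F) ((X ^ n - 1 : F[X]).rootSet L)
  rw [← Nat.card_eq_fintype_card, ← Nat.card_eq_fintype_card, IsGalois.card_aut_eq_finrank,
    ← (bijective_frobeniusAlgEquivOfAlgebraic_pow F L).sum_comp] at hburnside
  simp only [Fintype.card_eq_nat_card,
    card_fixedBy_frobeniusAlgEquivOfAlgebraic_pow hζ hn] at hburnside
  rw [Nat.card_eq_fintype_card (α := F)] at hburnside
  rw [ncard_monic_irreducible_dvd_eq_card_orbits (L := L)
    (by simpa using X_pow_sub_C_ne_zero hn (1 : F)) hsplit, ← hburnside,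
    Fin.sum_univ_eq_sum_range (fun k => (Fintype.card F ^ k - 1).gcd n)]

end FiniteField

universe u in
theorem exists_isPrimitiveRoot_finrank_eq_orderOf {F : Type u} [Field F] [Fintype F] {p f n : ℕ}
    [Fact p.Prime] (hF : Fintype.card F = p ^ f) (hn : p.Coprime n) :
    ∃ (L : Type u) (_ : Field L) (_ : Algebra F L) (_ : Finite L) (ζ : L),
      IsPrimitiveRoot ζ n ∧
        Module.finrank F L = orderOf (ZMod.unitOfCoprime _ (hn.pow_left f)) := by
  have hp : p.Prime := Fact.out
  have hn0 : 0 < n := Nat.pos_of_ne_zero fun h => hp.one_lt.ne' (by simpa [h] using hn)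
  have hcyc : ¬IsUnit (cyclotomic n F) := not_isUnit_of_natDegree_pos _ <| by
    rw [natDegree_cyclotomic]
    exact Nat.totient_pos.mpr hn0
  obtain ⟨P, hirr, hdvd⟩ := WfDvdMonoid.exists_irreducible_factor hcyc (cyclotomic_ne_zero n F)
  have : Fact (Irreducible P) := ⟨hirr⟩
  let pb := AdjoinRoot.powerBasis hirr.ne_zero
  have : Module.Finite F (AdjoinRoot P) := pb.finite
  have : CharP F p := charP_of_card_eq_prime_pow hF
  have : NeZero (n : F) :=
    ⟨fun h => hp.coprime_iff_not_dvd.mp hn ((CharP.cast_eq_zero_iff F p n).mp h)⟩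
  have : NeZero (n : AdjoinRoot P) := NeZero.nat_of_injective (algebraMap F _).injective
  refine ⟨AdjoinRoot P, inferInstance, inferInstance, Module.finite_of_finite F, AdjoinRoot.root P,
    ?_, ?_⟩
  · rw [← isRoot_cyclotomic_iff, IsRoot, ← map_cyclotomic n (algebraMap F (AdjoinRoot P)),
      eval_map, ← aeval_def, AdjoinRoot.aeval_eq, AdjoinRoot.mk_eq_zero]
    exact hdvd
  · rw [pb.finrank, AdjoinRoot.powerBasis_dim,
      natDegree_of_dvd_cyclotomic_of_irreducible hF hn hdvd hirr]

/-- The number of distinct monic irreducible factors of `x^n - 1` over `F_q`, where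
`n = p^s * n₀` with `gcd(n₀, p) = 1` and `d` is the least positive integer with
`n₀ ∣ q^d - 1`, equals `(1/d) * ∑_{r ∣ d} gcd(q^r - 1, n) * φ(d/r)`. -/
theorem stmt3 (F : Type*) [Field F] [Fintype F] (p s n₀ n q d : ℕ) (hp : p.Prime)
    [CharP F p] (hq : Fintype.card F = q) (hcop : Nat.Coprime n₀ p) (hn₀ : 0 < n₀)
    (hn : n = p ^ s * n₀)
    (hd : 0 < d ∧ n₀ ∣ q ^ d - 1 ∧ ∀ e, 0 < e → n₀ ∣ q ^ e - 1 → d ≤ e) :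
    (({g : F[X] | g.Monic ∧ Irreducible g ∧ g ∣ X ^ n - 1}).ncard : ℚ) =
      (1 / (d : ℚ)) * ∑ r ∈ d.divisors,
        (Nat.gcd (q ^ r - 1) n : ℚ) * (Nat.totient (d / r) : ℚ) := by
  have : Fact p.Prime := ⟨hp⟩
  obtain ⟨f, -, hF⟩ := FiniteField.card F p
  obtain rfl : q = p ^ (f : ℕ) := hq.symm.trans hF
  have hq0 : 0 < p ^ (f : ℕ) := pow_pos hp.pos _
  obtain ⟨L, _, _, _, ζ, hζ, hL⟩ := exists_isPrimitiveRoot_finrank_eq_orderOf hF hcop.symm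
  rw [ZMod.orderOf_unitOfCoprime_eq _ hq0 hd] at hL
  have hcount := ncard_monic_irreducible_dvd_X_pow_sub_one_mul_finrank (F := F) hζ hn₀
  rw [hL, hF, Nat.sum_range_gcd_pow_sub_one_eq_sum_divisors hd.2.1] at hcount
  have key : {g : F[X] | g.Monic ∧ Irreducible g ∧ g ∣ X ^ n - 1}.ncard * d =
      ∑ r ∈ d.divisors, ((p ^ (f : ℕ)) ^ r - 1).gcd n * (d / r).totient := by
    rw [hn, setOf_monic_irreducible_dvd_X_pow_char_pow_mul_sub_one p, hcount]
    refine Finset.sum_congr rfl fun r hr => ?_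
    rw [Nat.gcd_pow_sub_one_prime_pow_mul hp (dvd_pow_self p f.ne_zero) hq0
      (Nat.pos_of_mem_divisors hr).ne', mul_comm]
  rw [one_div_mul_eq_div, eq_div_iff (by exact_mod_cast hd.1.ne')]
  exact_mod_cast key
end

section
/- Let q be a power of a prime p, n = p^s * n_0 with gcd(n_0, p) = 1, and d the least positive integer with q^d ≡ 1 (mod n_0). Let v_r be the number of distinct monic irreducible degree-r factors of x^n - 1 over F_q. Then Φ_q(x^n - 1) = q^{n - n_0} * product over r dividing d of (q^r - 1)^{v_r}. -/
/-!
Since `n₀` is prime to `p`, `f = X ^ n₀ - 1` is separable, hence the product of distinct monic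
irreducibles `g`, and Frobenius gives `X ^ n - 1 = f ^ p ^ s`. The Chinese remainder theorem
splits `F[X] ⧸ (f ^ p ^ s)` into the local rings `F[X] ⧸ (g ^ p ^ s)`, whose units are the
elements outside the maximal ideal `(g)`: a fraction `(q ^ deg g - 1) / q ^ deg g` of all
`q ^ (p ^ s * deg g)` elements. Every root of `g` is fixed by the `d`-th power of Frobenius
because `n₀ ∣ q ^ d - 1`, so `deg g ∣ d`, and grouping the factors by degree gives the product
over the divisors of `d`.
-/

open Polynomial UniqueFactorizationMonoid Finset
open scoped Function

theorem Finset.prod_comp_of_mapsTo {ι κ M : Type*} [CommMonoid M] [DecidableEq κ] {s : Finset ι}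
    {t : Finset κ} {g : ι → κ} (h : ∀ i ∈ s, g i ∈ t) (f : κ → M) :
    ∏ i ∈ s, f (g i) = ∏ j ∈ t, f j ^ #{i ∈ s | g i = j} := by
  rw [← prod_fiberwise_of_maps_to h]
  refine prod_congr rfl fun j _ ↦ ?_
  rw [prod_congr rfl fun i hi ↦ by rw [(mem_filter.mp hi).2], prod_const]

namespace Ideal

variable {R : Type*} [CommRing R]

theorem natCard_units_quotient_pow_mul (I : Ideal R) [I.IsMaximal] {n : ℕ} (hn : n ≠ 0)
    [Finite (R ⧸ I ^ n)] : Nat.card (R ⧸ I ^ n)ˣ * Nat.card (R ⧸ I) =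
      Nat.card (R ⧸ I ^ n) * (Nat.card (R ⧸ I) - 1) := by
  let π : R ⧸ I ^ n →+* R ⧸ I := Quotient.factor (pow_le_self hn)
  have hπ : Function.Surjective π := Quotient.factor_surjective _
  have isUnit_iff (x : R ⧸ I ^ n) : IsUnit x ↔ x ∉ RingHom.ker π := by
    obtain ⟨a, rfl⟩ := Quotient.mk_surjective x
    rw [Quotient.isUnit_mk_pow_iff_notMem I hn, RingHom.mem_ker, Quotient.factor_mk,
      Quotient.eq_zero_iff_mem]
  have card_split :
      Nat.card (R ⧸ I ^ n) = Nat.card (RingHom.ker π) + Nat.card (R ⧸ I ^ n)ˣ := by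
    classical
    rw [← Nat.card_sum, Nat.card_congr (Equiv.sumCompl (· ∈ RingHom.ker π)).symm]
    exact Nat.card_congr <| (Equiv.refl _).sumCongr <|
      (Equiv.subtypeEquivRight fun x ↦ (isUnit_iff x).symm).trans
        Submonoid.unitsTypeEquivIsUnitSubmonoid.toEquiv.symm
  have card_fiber : Nat.card (R ⧸ I ^ n) = Nat.card (RingHom.ker π) * Nat.card (R ⧸ I) := by
    rw [← Nat.card_congr (RingHom.quotientKerEquivOfSurjective hπ).toEquiv]
    exact Submodule.card_eq_card_quotient_mul_card _
  have : Finite (R ⧸ I) := Finite.of_surjective π hπ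
  obtain ⟨m, hm⟩ : ∃ m, Nat.card (R ⧸ I) = m + 1 := Nat.exists_eq_add_one.mpr Nat.card_pos
  have card_units : Nat.card (R ⧸ I ^ n)ˣ = Nat.card (RingHom.ker π) * m := by
    rw [hm, mul_add_one] at card_fiber
    omega
  rw [card_units, card_fiber, hm, Nat.add_sub_cancel]
  ring

theorem natCard_units_quotient_span_prod {ι : Type*} (s : Finset ι) (f : ι → R)
    (hf : (s : Set ι).Pairwise (IsCoprime on f)) :
    Nat.card (R ⧸ span {∏ i ∈ s, f i})ˣ = ∏ i ∈ s, Nat.card (R ⧸ span {f i})ˣ := by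
  have hf' : Pairwise fun i j : s ↦ IsCoprime (f i) (f j) := fun i j hij ↦
    hf i.2 j.2 (Subtype.coe_ne_coe.mpr hij)
  have hinf : ⨅ i : s, span {f i} = span {∏ i ∈ s, f i} := by
    rw [iInf_span_singleton fun i j hij ↦ hf' hij, Finset.prod_coe_sort]
  let crt := (quotEquivOfEq hinf.symm).trans <| quotientInfRingEquivPiQuotient _
    fun i j hij ↦ (isCoprime_span_singleton_iff _ _).mpr (hf' hij)
  rw [Nat.card_congr (Units.mapEquiv crt.toMulEquiv).toEquiv,
    Nat.card_congr MulEquiv.piUnits.toEquiv, Nat.card_pi,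
    Finset.prod_coe_sort s fun i ↦ Nat.card (R ⧸ span {f i})ˣ]

end Ideal

namespace Polynomial

variable {F : Type*} [Field F]

theorem natCard_quotient_span [Finite F] {h : F[X]} (hh : h ≠ 0) :
    Nat.card (F[X] ⧸ Ideal.span {h}) = Nat.card F ^ h.natDegree := by
  have : Module.Finite F (F[X] ⧸ Ideal.span {h}) := (AdjoinRoot.powerBasis hh).finite
  rw [Module.natCard_eq_pow_finrank (K := F), finrank_quotient_span_eq_natDegree]

theorem natCard_units_quotient_span_pow [Finite F] {g : F[X]} (hg : Irreducible g) {e : ℕ}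
    (he : e ≠ 0) : Nat.card (F[X] ⧸ Ideal.span {g ^ e})ˣ =
      Nat.card F ^ (g.natDegree * (e - 1)) * (Nat.card F ^ g.natDegree - 1) := by
  have : (Ideal.span {g}).IsMaximal := PrincipalIdealRing.isMaximal_of_irreducible hg
  have hge : g ^ e ≠ 0 := pow_ne_zero e hg.ne_zero
  have : Finite (F[X] ⧸ Ideal.span {g} ^ e) := Nat.finite_of_card_ne_zero <| by
    rw [Ideal.span_singleton_pow, natCard_quotient_span hge]
    exact pow_ne_zero _ Nat.card_pos.ne'
  have key := Ideal.natCard_units_quotient_pow_mul (Ideal.span {g}) he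
  rw [Ideal.span_singleton_pow, natCard_quotient_span hge, natCard_quotient_span hg.ne_zero,
    natDegree_pow] at key
  obtain ⟨k, rfl⟩ := Nat.exists_eq_add_one.mpr (Nat.pos_of_ne_zero he)
  refine Nat.eq_of_mul_eq_mul_right (pow_pos (Nat.card_pos (α := F)) g.natDegree) ?_
  rw [key, Nat.add_sub_cancel]
  ring

theorem _root_.Irreducible.natDegree_dvd_of_dvd_X_pow_sub_one [Finite F] {g : F[X]}
    (hg : Irreducible g) {m d : ℕ} (hgm : g ∣ X ^ m - 1) (hmd : m ∣ Nat.card F ^ d - 1) :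
    g.natDegree ∣ d := by
  refine hg.natDegree_dvd_of_dvd_X_pow_card_pow_sub_X (hgm.trans ?_)
  obtain ⟨k, hk⟩ : ∃ k, Nat.card F ^ d = k + 1 :=
    Nat.exists_eq_add_one.mpr (pow_pos Nat.card_pos d)
  rw [hk, Nat.add_sub_cancel] at hmd
  rw [hk]
  exact (dvd_pow_sub_one_of_dvd hmd).trans (Dvd.intro_left X (by ring))

variable [DecidableEq F]

theorem prod_toFinset_normalizedFactors_of_squarefree {f : F[X]} (hf : f.Monic)
    (hsq : Squarefree f) : ∏ g ∈ (normalizedFactors f).toFinset, g = f := by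
  rw [Finset.prod_eq_multiset_prod, Multiset.toFinset_val,
    Multiset.dedup_eq_self.mpr ((squarefree_iff_nodup_normalizedFactors hf.ne_zero).mp hsq),
    Multiset.map_id', prod_normalizedFactors_eq hf.ne_zero, hf.normalize_eq_self]

theorem natCard_units_quotient_span_pow_of_squarefree [Finite F] {f : F[X]} (hf : f.Monic)
    (hsq : Squarefree f) {e : ℕ} (he : e ≠ 0) :
    Nat.card (F[X] ⧸ Ideal.span {f ^ e})ˣ = Nat.card F ^ (f.natDegree * (e - 1)) *
      ∏ g ∈ (normalizedFactors f).toFinset, (Nat.card F ^ g.natDegree - 1) := by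
  set P := (normalizedFactors f).toFinset
  have hP (g : F[X]) (hg : g ∈ P) : Irreducible g ∧ g.Monic ∧ g ∣ f :=
    (Polynomial.mem_normalizedFactors_iff hf.ne_zero).mp (Multiset.mem_toFinset.mp hg)
  have hcop : (P : Set F[X]).Pairwise (IsCoprime on (· ^ e)) := by
    intro g hg h hh hne
    refine IsCoprime.pow ((hP g hg).1.coprime_iff_not_dvd.mpr fun hdvd ↦ hne ?_)
    exact eq_of_monic_of_associated (hP g hg).2.1 (hP h hh).2.1
      ((hP g hg).1.associated_of_dvd (hP h hh).1 hdvd)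
  have hprod := prod_toFinset_normalizedFactors_of_squarefree hf hsq
  conv_lhs => rw [← hprod, ← Finset.prod_pow]
  conv_rhs => rw [← hprod, natDegree_prod _ _ fun g hg ↦ (hP g hg).1.ne_zero]
  rw [Ideal.natCard_units_quotient_span_prod P (· ^ e) hcop,
    Finset.prod_congr rfl fun g hg ↦ natCard_units_quotient_span_pow (hP g hg).1 he,
    Finset.prod_mul_distrib, Finset.prod_pow_eq_pow_sum, Finset.sum_mul]

theorem setOf_monic_irreducible_dvd_natDegree_eq {f : F[X]} (hf : f ≠ 0) (r : ℕ) :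
    {g : F[X] | g.Monic ∧ Irreducible g ∧ g.natDegree = r ∧ g ∣ f} =
      ↑{g ∈ (normalizedFactors f).toFinset | g.natDegree = r} := by
  ext g
  simp only [Set.mem_ofPred_eq, Finset.coe_filter, Multiset.mem_toFinset,
    Polynomial.mem_normalizedFactors_iff hf]
  tauto

end Polynomial

theorem stmt7_general (F : Type*) [Field F] [Fintype F] (p s n₀ n q d : ℕ) (hp : p.Prime)
    [CharP F p] (hq : Fintype.card F = q) (hcop : Nat.Coprime n₀ p)
    (hn : n = p ^ s * n₀)
    (hd : 0 < d ∧ n₀ ∣ q ^ d - 1 ∧ ∀ e, 0 < e → n₀ ∣ q ^ e - 1 → d ≤ e)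
    (v : ℕ → ℕ)
    (hv : ∀ r, v r = ({g : F[X] | g.Monic ∧ Irreducible g ∧ g.natDegree = r ∧
      g ∣ X ^ n - 1}).ncard) :
    Nat.card ((F[X] ⧸ Ideal.span {(X : F[X]) ^ n - 1})ˣ) =
      q ^ (n - n₀) * ∏ r ∈ d.divisors, (q ^ r - 1) ^ v r := by
  classical
  subst hq hn
  rw [Fintype.card_eq_nat_card] at hd ⊢
  have : Fact p.Prime := ⟨hp⟩
  have hn₀F : (n₀ : F) ≠ 0 := by
    rw [Ne, CharP.cast_eq_zero_iff F p]
    exact hp.coprime_iff_not_dvd.mp hcop.symm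
  set f : F[X] := X ^ n₀ - 1
  have hf : f.Monic := by
    simpa using monic_X_pow_sub_C (1 : F) (n := n₀) (by rintro rfl; simp at hn₀F)
  have hfdeg : f.natDegree = n₀ := by simpa using natDegree_X_pow_sub_C (n := n₀) (r := (1 : F))
  have hXn : X ^ (p ^ s * n₀) - 1 = f ^ p ^ s := by
    rw [sub_pow_char_pow, one_pow, ← pow_mul, mul_comm]
  have hv_factors (r : ℕ) : v r = #{g ∈ (normalizedFactors f).toFinset | g.natDegree = r} := by
    rw [hv, hXn, setOf_monic_irreducible_dvd_natDegree_eq (pow_ne_zero _ hf.ne_zero),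
      Set.ncard_coe_finset, normalizedFactors_pow,
      Multiset.toFinset_nsmul _ _ (pow_ne_zero _ hp.ne_zero)]
  have hdeg (g : F[X]) (hg : g ∈ (normalizedFactors f).toFinset) :
      g.natDegree ∈ d.divisors := by
    obtain ⟨hirr, -, hdvd⟩ :=
      (Polynomial.mem_normalizedFactors_iff hf.ne_zero).mp (Multiset.mem_toFinset.mp hg)
    exact Nat.mem_divisors.mpr ⟨hirr.natDegree_dvd_of_dvd_X_pow_sub_one hdvd hd.2.1, hd.1.ne'⟩
  rw [hXn, natCard_units_quotient_span_pow_of_squarefree hf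
    (X_pow_sub_one_separable_iff.mpr hn₀F).squarefree (pow_ne_zero _ hp.ne_zero), hfdeg,
    Nat.mul_sub_one, mul_comm n₀, Finset.prod_comp_of_mapsTo hdeg fun r ↦ Nat.card F ^ r - 1]
  simp only [hv_factors]

/-- `Φ_q(x^n - 1) = q^{n - n₀} * ∏_{r ∣ d} (q^r - 1)^{v_r}`. -/
theorem stmt7 (F : Type*) [Field F] [Fintype F] (p s n₀ n q d : ℕ) (hp : p.Prime)
    [CharP F p] (hq : Fintype.card F = q) (hcop : Nat.Coprime n₀ p) (hn₀ : 0 < n₀)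
    (hn : n = p ^ s * n₀)
    (hd : 0 < d ∧ n₀ ∣ q ^ d - 1 ∧ ∀ e, 0 < e → n₀ ∣ q ^ e - 1 → d ≤ e)
    (v : ℕ → ℕ)
    (hv : ∀ r, v r = ({g : F[X] | g.Monic ∧ Irreducible g ∧ g.natDegree = r ∧
      g ∣ X ^ n - 1}).ncard) :
    Nat.card ((F[X] ⧸ Ideal.span {(X : F[X]) ^ n - 1})ˣ) =
      q ^ (n - n₀) * ∏ r ∈ d.divisors, (q ^ r - 1) ^ v r :=
  stmt7_general F p s n₀ n q d hp hq hcop hn hd v hv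
end

section
/- Let N_k be the number of k-normal elements of F_{q^n} over F_q and N_0 the number of normal elements. If N_k > 0, then N_k ≥ N_0 / q^k. -/
/-!
Let `α` be `k`-normal and `h := gcd (X ^ n - 1) g_α`, a monic divisor of `X ^ n - 1` of degree
`k`. Since `g_{α^q} ≡ X g_α (mod X ^ n - 1)` and `X` is a unit modulo `X ^ n - 1`, the gcd is
Frobenius-invariant, so `h ∈ 𝔽_q[X]`; hence the linearized map `L_h(β) = ∑ hᵢ β^{qⁱ}` satisfies
`g_{L_h β} ≡ h g_β`. For normal `β` this gives `gcd (X ^ n - 1) g_{L_h β} = h`, so `L_h` maps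
normal elements to `k`-normal ones. It is additive and its kernel consists of roots of
`∑ hᵢ X^{qⁱ}`, a nonzero polynomial of degree `q ^ k`, so its fibres have at most `q ^ k`
elements and `N₀ ≤ q ^ k N_k`.
-/

open Polynomial Finset

theorem IsCoprime.gcd_mul_left_cancel_right {α : Type*} [CommRing α] [IsDomain α]
    [NormalizedGCDMonoid α] {k m : α} (n : α) (h : IsCoprime k m) : gcd m (k * n) = gcd m n :=
  dvd_antisymm_of_normalize_eq (normalize_gcd _ _) (normalize_gcd _ _)
    (dvd_gcd (gcd_dvd_left _ _) <|
      (h.symm.of_isCoprime_of_dvd_left (gcd_dvd_left _ _)).dvd_of_dvd_mul_left (gcd_dvd_right _ _))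
    (gcd_dvd_gcd dvd_rfl (dvd_mul_left n k))

namespace KNormal

section CommRing

variable {R : Type*} [CommRing R] (σ : R →+* R) {n : ℕ}

lemma pow_apply_of_apply_eq_self {c : R} (hc : σ c = c) (i : ℕ) : (σ ^ i) c = c := by
  rw [RingHom.coe_pow]
  exact Function.iterate_fixed hc i

lemma pow_succ_apply (i : ℕ) (α : R) : (σ ^ (i + 1)) α = σ ((σ ^ i) α) := by
  simp only [RingHom.coe_pow, Function.iterate_succ_apply']

lemma pow_apply_eq_pow_pow {q : ℕ} (hσ : ∀ x, σ x = x ^ q) (i : ℕ) (x : R) :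
    (σ ^ i) x = x ^ q ^ i := by
  rw [RingHom.coe_pow, show ⇑σ = (· ^ q) from funext hσ, pow_iterate]

lemma X_pow_sub_one_ne_zero [Nontrivial R] (hn : 0 < n) : (X : R[X]) ^ n - 1 ≠ 0 := by
  simpa using X_pow_sub_C_ne_zero hn (1 : R)

lemma isCoprime_X_pow_sub_one_X (hn : 0 < n) : IsCoprime ((X : R[X]) ^ n - 1) X :=
  ⟨-1, X ^ (n - 1), by rw [← pow_succ, Nat.sub_add_cancel hn]; ring⟩

/-- The paper's `g_α = ∑ α^{q^i} X^{n-1-i}`, with the Frobenius `x ↦ x ^ q` replaced by `σ`. -/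
noncomputable def twistedPoly (n : ℕ) : R →+ R[X] where
  toFun α := ∑ i ∈ range n, C ((σ ^ i) α) * X ^ (n - 1 - i)
  map_zero' := by simp
  map_add' α β := by simp only [map_add, add_mul, sum_add_distrib]

lemma twistedPoly_apply (α : R) :
    twistedPoly σ n α = ∑ i ∈ range n, C ((σ ^ i) α) * X ^ (n - 1 - i) := rfl

lemma twistedPoly_mul_of_apply_eq_self {c : R} (hc : σ c = c) (α : R) :
    twistedPoly σ n (c * α) = C c * twistedPoly σ n α := by
  simp only [twistedPoly_apply, map_mul, pow_apply_of_apply_eq_self σ hc, mul_sum,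
    mul_assoc]

lemma map_twistedPoly (α : R) : (twistedPoly σ n α).map σ = twistedPoly σ n (σ α) := by
  simp only [twistedPoly_apply, Polynomial.map_sum, Polynomial.map_mul, Polynomial.map_pow,
    map_C, map_X]
  refine sum_congr rfl fun i _ => ?_
  rw [← pow_succ_apply]
  simp only [RingHom.coe_pow, Function.iterate_succ_apply]

lemma X_mul_twistedPoly (hσ : σ ^ n = 1) (α : R) :
    X * twistedPoly σ n α = twistedPoly σ n (σ α) + C α * (X ^ n - 1) := by
  cases n with
  | zero => simp [twistedPoly_apply]
  | succ m =>
    have hshift : ∀ i, (σ ^ i) (σ α) = (σ ^ (i + 1)) α := fun i => by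
      simp only [RingHom.coe_pow, Function.iterate_succ_apply]
    have hperiod : (σ ^ (m + 1)) α = α := by rw [hσ, RingHom.coe_one, id]
    rw [twistedPoly_apply, twistedPoly_apply, mul_sum, sum_range_succ', sum_range_succ]
    simp only [hshift, hperiod, pow_zero, RingHom.coe_one, id, Nat.add_sub_cancel, Nat.sub_self,
      Nat.sub_zero]
    have hexp : ∀ i ∈ range m, X * (C ((σ ^ (i + 1)) α) * X ^ (m - (i + 1))) =
        C ((σ ^ (i + 1)) α) * X ^ (m - i) := fun i hi => by
      rw [mem_range] at hi
      rw [show m - i = m - (i + 1) + 1 by omega, pow_succ]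
      ring
    rw [sum_congr rfl hexp]
    ring

lemma X_pow_sub_one_dvd_twistedPoly_pow_apply (hσ : σ ^ n = 1) (α : R) (j : ℕ) :
    X ^ n - 1 ∣ twistedPoly σ n ((σ ^ j) α) - X ^ j * twistedPoly σ n α := by
  induction j with
  | zero => simp
  | succ j ih =>
    have hstep : twistedPoly σ n ((σ ^ (j + 1)) α) - X ^ (j + 1) * twistedPoly σ n α =
        X * (twistedPoly σ n ((σ ^ j) α) - X ^ j * twistedPoly σ n α) -
          C ((σ ^ j) α) * (X ^ n - 1) := by
      rw [pow_succ_apply]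
      linear_combination -X_mul_twistedPoly σ hσ ((σ ^ j) α)
    rw [hstep]
    exact dvd_sub (dvd_mul_of_dvd_right ih X) (dvd_mul_left _ _)

noncomputable def linearizedMap (h : R[X]) : R →+ R where
  toFun β := h.sum fun i c => c * (σ ^ i) β
  map_zero' := by simp [Polynomial.sum]
  map_add' β γ := by simp only [Polynomial.sum, map_add, mul_add, sum_add_distrib]

lemma linearizedMap_apply (h : R[X]) (β : R) :
    linearizedMap σ h β = ∑ i ∈ h.support, h.coeff i * (σ ^ i) β := rfl

lemma X_pow_sub_one_dvd_twistedPoly_linearizedMap (hσ : σ ^ n = 1) {h : R[X]}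
    (hh : ∀ i, σ (h.coeff i) = h.coeff i) (β : R) :
    X ^ n - 1 ∣ twistedPoly σ n (linearizedMap σ h β) - h * twistedPoly σ n β := by
  have hmul : h * twistedPoly σ n β =
      ∑ i ∈ h.support, C (h.coeff i) * (X ^ i * twistedPoly σ n β) := by
    conv_lhs => rw [as_sum_support_C_mul_X_pow h]
    simp only [sum_mul, mul_assoc]
  rw [hmul, linearizedMap_apply, map_sum, ← sum_sub_distrib]
  refine dvd_sum fun i _ => ?_
  rw [twistedPoly_mul_of_apply_eq_self σ (hh i), ← mul_sub]
  exact dvd_mul_of_dvd_right (X_pow_sub_one_dvd_twistedPoly_pow_apply σ hσ β i) _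

noncomputable def linearizedAssociate (q : ℕ) (h : R[X]) : R[X] :=
  h.sum fun i c => C c * X ^ q ^ i

lemma eval_linearizedAssociate {q : ℕ} (hσ : ∀ x, σ x = x ^ q) (h : R[X]) (x : R) :
    (linearizedAssociate q h).eval x = linearizedMap σ h x := by
  simp [linearizedAssociate, linearizedMap_apply, Polynomial.sum, eval_finsetSum,
    pow_apply_eq_pow_pow σ hσ]

lemma natDegree_linearizedAssociate_le {q : ℕ} (hq : 0 < q) (h : R[X]) :
    (linearizedAssociate q h).natDegree ≤ q ^ h.natDegree :=
  natDegree_sum_le_of_forall_le _ _ fun i hi => (natDegree_C_mul_le _ _).trans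
    ((natDegree_X_pow_le _).trans (Nat.pow_le_pow_right hq (le_natDegree_of_mem_supp i hi)))

lemma coeff_linearizedAssociate_pow_natDegree {q : ℕ} (hq : 1 < q) (h : R[X]) :
    (linearizedAssociate q h).coeff (q ^ h.natDegree) = h.leadingCoeff := by
  rw [linearizedAssociate, Polynomial.sum, finsetSum_coeff, sum_eq_single h.natDegree]
  · simp [coeff_C_mul, coeff_X_pow]
  · intro i _ hi
    rw [coeff_C_mul, coeff_X_pow, if_neg ((Nat.pow_right_injective hq).ne hi).symm, mul_zero]
  · intro hnot
    simp [notMem_support_iff.mp hnot]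

end CommRing

lemma card_le_card_fiber_zero_mul_card {G H : Type*} [AddGroup G] [Fintype G] [AddMonoid H]
    [DecidableEq H] (f : G →+ H) {s : Finset G} {t : Finset H} (hst : ∀ a ∈ s, f a ∈ t) :
    #s ≤ #{g | f g = 0} * #t := by
  refine card_le_mul_card_image_of_maps_to hst _ fun b _ => ?_
  by_cases hb : b ∈ Set.range f
  · rw [← AddMonoidHom.card_fiber_eq_of_mem_range f hb ⟨0, map_zero f⟩]
    exact card_le_card (filter_subset_filter _ (subset_univ s))
  · rw [filter_eq_empty_iff.mpr fun a _ hfa => hb ⟨a, hfa⟩, card_empty]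
    exact Nat.zero_le _

section Field

variable {K : Type*} [Field K] [DecidableEq K] (σ : K →+* K) {n : ℕ}

lemma monic_gcd_of_left_ne_zero {a : K[X]} (ha : a ≠ 0) (b : K[X]) : (gcd a b).Monic := by
  rw [← _root_.normalize_gcd]
  exact monic_normalize (gcd_ne_zero_of_left ha)

lemma natDegree_euclideanDomain_gcd [DecidableEq K[X]] (a b : K[X]) :
    (EuclideanDomain.gcd a b).natDegree = (gcd a b).natDegree :=
  natDegree_eq_of_degree_eq <| degree_eq_degree_of_associated <| associated_of_dvd_dvd
    (dvd_gcd (EuclideanDomain.gcd_dvd_left a b) (EuclideanDomain.gcd_dvd_right a b))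
    (EuclideanDomain.dvd_gcd (gcd_dvd_left a b) (gcd_dvd_right a b))

def IsKNormal (n k : ℕ) (α : K) : Prop :=
  (gcd (X ^ n - 1 : K[X]) (twistedPoly σ n α)).natDegree = k

lemma gcd_twistedPoly_apply (hσ : σ ^ n = 1) (hn : 0 < n) (α : K) :
    gcd (X ^ n - 1) (twistedPoly σ n (σ α)) = gcd (X ^ n - 1) (twistedPoly σ n α) := by
  rw [gcd_eq_of_dvd_sub_right (c := X * twistedPoly σ n α)]
  · exact (isCoprime_X_pow_sub_one_X hn).symm.gcd_mul_left_cancel_right _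
  · rw [X_mul_twistedPoly σ hσ]
    exact ⟨-C α, by ring⟩

lemma map_gcd_twistedPoly (hσ : σ ^ n = 1) (hn : 0 < n) (α : K) :
    (gcd (X ^ n - 1) (twistedPoly σ n α)).map σ = gcd (X ^ n - 1) (twistedPoly σ n α) := by
  set d := gcd (X ^ n - 1) (twistedPoly σ n α)
  have hd : d.Monic := monic_gcd_of_left_ne_zero (X_pow_sub_one_ne_zero hn) _
  refine (eq_of_monic_of_dvd_of_natDegree_le (hd.map σ) hd ?_ (natDegree_map σ).ge).symm
  calc d.map σ ∣ gcd (X ^ n - 1) (twistedPoly σ n (σ α)) := by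
        refine dvd_gcd ?_ ?_
        · have := map_dvd (mapRingHom σ) (gcd_dvd_left (X ^ n - 1 : K[X]) (twistedPoly σ n α))
          rwa [coe_mapRingHom, Polynomial.map_sub, Polynomial.map_pow, map_X,
            Polynomial.map_one] at this
        · simpa only [coe_mapRingHom, map_twistedPoly] using
            map_dvd (mapRingHom σ) (gcd_dvd_right (X ^ n - 1) (twistedPoly σ n α))
    _ = d := gcd_twistedPoly_apply σ hσ hn α

lemma gcd_twistedPoly_linearizedMap (hσ : σ ^ n = 1) {h : K[X]}
    (hh : ∀ i, σ (h.coeff i) = h.coeff i) (hmonic : h.Monic) (hdvd : h ∣ X ^ n - 1) {β : K}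
    (hβ : IsCoprime (X ^ n - 1) (twistedPoly σ n β)) :
    gcd (X ^ n - 1) (twistedPoly σ n (linearizedMap σ h β)) = h := by
  rw [gcd_eq_of_dvd_sub_right (X_pow_sub_one_dvd_twistedPoly_linearizedMap σ hσ hh β), mul_comm,
    hβ.symm.gcd_mul_left_cancel_right, gcd_eq_right_iff _ _ hmonic.normalize_eq_self]
  exact hdvd

lemma isCoprime_of_isKNormal_zero (hn : 0 < n) {β : K} (hβ : IsKNormal σ n 0 β) :
    IsCoprime (X ^ n - 1) (twistedPoly σ n β) := by
  rw [← gcd_isUnit_iff,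
    eq_one_of_monic_natDegree_zero (monic_gcd_of_left_ne_zero (X_pow_sub_one_ne_zero hn) _) hβ]
  exact isUnit_one

lemma card_linearizedMap_eq_zero_le [Fintype K] {q : ℕ} (hq : 1 < q) (hσ : ∀ x, σ x = x ^ q)
    {h : K[X]} (hh : h ≠ 0) : #{x | linearizedMap σ h x = 0} ≤ q ^ h.natDegree := by
  have hP : linearizedAssociate q h ≠ 0 := fun h0 => hh <| leadingCoeff_eq_zero.mp <| by
    rw [← coeff_linearizedAssociate_pow_natDegree hq, h0, coeff_zero]
  calc #{x | linearizedMap σ h x = 0}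
      ≤ #(linearizedAssociate q h).roots.toFinset := card_le_card fun x hx => by
        simpa [mem_roots hP, IsRoot, eval_linearizedAssociate σ hσ] using hx
    _ ≤ Multiset.card (linearizedAssociate q h).roots := Multiset.toFinset_card_le _
    _ ≤ (linearizedAssociate q h).natDegree := card_roots' _
    _ ≤ q ^ h.natDegree := natDegree_linearizedAssociate_le (by omega) h

theorem ncard_isKNormal_zero_le [Fintype K] {q n k : ℕ} (hq : 1 < q) (hn : 0 < n)
    (hσq : ∀ x, σ x = x ^ q) (hσn : σ ^ n = 1) (hk : ∃ α, IsKNormal σ n k α) :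
    {α | IsKNormal σ n 0 α}.ncard ≤ q ^ k * {α | IsKNormal σ n k α}.ncard := by
  classical
  obtain ⟨α, hα⟩ := hk
  set h := gcd (X ^ n - 1) (twistedPoly σ n α)
  have hmonic : h.Monic := monic_gcd_of_left_ne_zero (X_pow_sub_one_ne_zero hn) _
  have hfixed : ∀ i, σ (h.coeff i) = h.coeff i := fun i => by
    rw [← coeff_map, map_gcd_twistedPoly σ hσn hn]
  have hmaps : ∀ β, IsKNormal σ n 0 β → IsKNormal σ n k (linearizedMap σ h β) := fun β hβ => by
    rw [IsKNormal, gcd_twistedPoly_linearizedMap σ hσn hfixed hmonic (gcd_dvd_left _ _)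
      (isCoprime_of_isKNormal_zero σ hn hβ)]
    exact hα
  simp only [Set.ncard_eq_toFinset_card', Set.toFinset_ofPred]
  calc _ ≤ #{x | linearizedMap σ h x = 0} * #{α | IsKNormal σ n k α} :=
        card_le_card_fiber_zero_mul_card _ (by simpa using hmaps)
    _ ≤ q ^ k * _ := by
        gcongr
        exact hα ▸ card_linearizedMap_eq_zero_le σ hq hσq hmonic.ne_zero

end Field

end KNormal

open KNormal

theorem stmt12_general (F E : Type*) [Field F] [Field E] [Algebra F E] [Fintype F] [Fintype E] [DecidableEq E[X]]
    (q n k : ℕ) (hq : Fintype.card F = q) (hfin : Module.finrank F E = n)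
    (hn : 0 < n)
    (hpos : 0 < ({α : E | (EuclideanDomain.gcd ((X : E[X]) ^ n - 1)
        (∑ i ∈ Finset.range n, C (α ^ q ^ i) * X ^ (n - 1 - i))).natDegree = k}).ncard) :
    (({α : E | (EuclideanDomain.gcd ((X : E[X]) ^ n - 1)
        (∑ i ∈ Finset.range n, C (α ^ q ^ i) * X ^ (n - 1 - i))).natDegree = 0}).ncard : ℚ)
      / q ^ k ≤
    (({α : E | (EuclideanDomain.gcd ((X : E[X]) ^ n - 1)
        (∑ i ∈ Finset.range n, C (α ^ q ^ i) * X ^ (n - 1 - i))).natDegree = k}).ncard : ℚ) := by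
  classical
  let σ : E →+* E := FiniteField.frobeniusAlgHom F E
  have hq1 : 1 < q := hq ▸ Fintype.one_lt_card
  have hσq : ∀ x, σ x = x ^ q := fun x => by simp [σ, hq]
  have hσn : σ ^ n = 1 := RingHom.ext fun x => by
    rw [pow_apply_eq_pow_pow σ hσq, RingHom.coe_one, id, ← hq, ← hfin, ← Module.card_eq_pow_finrank,
      FiniteField.pow_card]
  have hsets : ∀ j, {α : E | (EuclideanDomain.gcd ((X : E[X]) ^ n - 1)
      (∑ i ∈ Finset.range n, C (α ^ q ^ i) * X ^ (n - 1 - i))).natDegree = j} =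
      {α | IsKNormal σ n j α} := fun j => by
    simp only [IsKNormal, natDegree_euclideanDomain_gcd, twistedPoly_apply,
      pow_apply_eq_pow_pow σ hσq]
  simp only [hsets] at hpos ⊢
  rw [div_le_iff₀ (by positivity), mul_comm]
  exact_mod_cast ncard_isKNormal_zero_le σ hq1 hn hσq hσn (Set.nonempty_of_ncard_ne_zero hpos.ne')

/-- If `k`-normal elements of `F_{q^n}` over `F_q` exist, then `N_k ≥ N_0 / q^k`. -/
theorem stmt12 (F E : Type*) [Field F] [Field E] [Algebra F E] [Fintype F] [Fintype E] [DecidableEq E[X]]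
    (q n k : ℕ) (hq : Fintype.card F = q) (hfin : Module.finrank F E = n)
    (hn : 0 < n) (hk : k ≤ n)
    (hpos : 0 < ({α : E | (EuclideanDomain.gcd ((X : E[X]) ^ n - 1)
        (∑ i ∈ Finset.range n, C (α ^ q ^ i) * X ^ (n - 1 - i))).natDegree = k}).ncard) :
    (({α : E | (EuclideanDomain.gcd ((X : E[X]) ^ n - 1)
        (∑ i ∈ Finset.range n, C (α ^ q ^ i) * X ^ (n - 1 - i))).natDegree = 0}).ncard : ℚ)
      / q ^ k ≤
    (({α : E | (EuclideanDomain.gcd ((X : E[X]) ^ n - 1)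
        (∑ i ∈ Finset.range n, C (α ^ q ^ i) * X ^ (n - 1 - i))).natDegree = k}).ncard : ℚ) :=
  stmt12_general F E q n k hq hfin hn hpos
end

section
/- Let n be coprime to q. Then N_1 = (v_1 / (q - 1)) * N_0, where N_0 and N_1 are the numbers of normal and 1-normal elements of F_{q^n} over F_q respectively, and v_1 = gcd(q - 1, n). -/
/-!
Fix an `n`-th root of unity `a` with `a ^ q = a` and write `X ^ n - 1 = (X - a) M`; as `n`
is prime to `q`, the two factors are coprime. Then `α` is normal iff `g_α` is coprime to `M`
and `g_α(a) ≠ 0`, while `α` is `1`-normal with `g_α(a) = 0` iff `g_α` is coprime to `M` and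
`g_α(a) = 0`. If `γ ^ (q - 1) = a` then `g_γ = γ M`, so `α ↦ α + γ` keeps the first condition
and moves `g_α(a)` by `γ M(a) ≠ 0`; conversely `γ = g_α(a) / M(a)` satisfies `γ ^ (q - 1) = a`
because `g_α(a) ^ q = a g_α(a)`. Hence the normal elements correspond to pairs of a `1`-normal
element vanishing at `a` and one of the `q - 1` solutions `γ`. Every `1`-normal element has
exactly one such root `a`, and there are `gcd (q - 1, n)` candidates for `a`.
-/

open Polynomial Finset

section Gcd

variable {K : Type*} [Field K] [DecidableEq K[X]]

theorem natDegree_gcd_eq_zero_iff {P H : K[X]} (hP : P ≠ 0) :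
    (EuclideanDomain.gcd P H).natDegree = 0 ↔ IsCoprime P H := by
  have hD : EuclideanDomain.gcd P H ≠ 0 := fun h => hP (EuclideanDomain.gcd_eq_zero_iff.mp h).1
  rw [← EuclideanDomain.gcd_isUnit_iff, isUnit_iff_degree_eq_zero, degree_eq_natDegree hD]
  exact Nat.cast_eq_zero.symm

theorem X_sub_C_dvd_gcd {P H : K[X]} {a : K} (hP : P.IsRoot a) (hH : H.IsRoot a) :
    X - C a ∣ EuclideanDomain.gcd P H :=
  EuclideanDomain.dvd_gcd (dvd_iff_isRoot.mpr hP) (dvd_iff_isRoot.mpr hH)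

theorem exists_isRoot_of_natDegree_gcd_eq_one {P H : K[X]}
    (h : (EuclideanDomain.gcd P H).natDegree = 1) : ∃ a, P.IsRoot a ∧ H.IsRoot a := by
  obtain ⟨a, ha⟩ :=
    exists_root_of_degree_eq_one ((degree_eq_iff_natDegree_eq_of_pos one_pos).mpr h)
  exact ⟨a, ha.dvd (EuclideanDomain.gcd_dvd_left P H),
    ha.dvd (EuclideanDomain.gcd_dvd_right P H)⟩

theorem eq_of_isRoot_of_natDegree_gcd_eq_one {P H : K[X]} (hP : P ≠ 0)
    (h : (EuclideanDomain.gcd P H).natDegree = 1) {a b : K} (hPa : P.IsRoot a) (hHa : H.IsRoot a)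
    (hPb : P.IsRoot b) (hHb : H.IsRoot b) : a = b := by
  by_contra hab
  have hdvd : (X - C a) * (X - C b) ∣ EuclideanDomain.gcd P H :=
    (isCoprime_X_sub_C_of_isUnit_sub (sub_ne_zero.mpr hab).isUnit).mul_dvd
      (X_sub_C_dvd_gcd hPa hHa) (X_sub_C_dvd_gcd hPb hHb)
  have := natDegree_le_of_dvd hdvd fun h0 => hP (EuclideanDomain.gcd_eq_zero_iff.mp h0).1
  rw [natDegree_mul (X_sub_C_ne_zero a) (X_sub_C_ne_zero b), natDegree_X_sub_C,
    natDegree_X_sub_C, h] at this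
  omega

end Gcd

section RootCofactor

variable {K : Type*} [Field K] {n : ℕ} {a : K}

/-- `(X ^ n - 1) / (X - a)` for an `n`-th root of unity `a`. -/
noncomputable def rootCofactor (n : ℕ) (a : K) : K[X] :=
  ∑ i ∈ range n, C a ^ i * X ^ (n - 1 - i)

theorem isRoot_X_pow_sub_one : (X ^ n - 1 : K[X]).IsRoot a ↔ a ^ n = 1 := by
  simp [sub_eq_zero]

theorem X_pow_sub_one_ne_zero (hn : n ≠ 0) : (X ^ n - 1 : K[X]) ≠ 0 := by
  simpa using X_pow_sub_C_ne_zero (Nat.pos_of_ne_zero hn) (1 : K)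

theorem X_sub_C_mul_rootCofactor (ha : a ^ n = 1) : (X - C a) * rootCofactor n a = X ^ n - 1 := by
  have hCa : C a ^ n = 1 := by rw [← C_pow, ha, C_1]
  rw [rootCofactor]
  linear_combination -geom_sum₂_mul (C a) X n - hCa

theorem eval_rootCofactor_self : (rootCofactor n a).eval a = n * a ^ (n - 1) := by
  simp only [rootCofactor, eval_finsetSum, eval_mul, eval_pow, eval_C, eval_X]
  rw [sum_congr rfl fun i hi => by rw [← pow_add, show i + (n - 1 - i) = n - 1 by
    have := mem_range.mp hi; omega], sum_const, card_range, nsmul_eq_mul]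

theorem eval_rootCofactor_self_ne_zero (hn : (n : K) ≠ 0) (ha : a ^ n = 1) :
    (rootCofactor n a).eval a ≠ 0 := by
  have hn0 : n ≠ 0 := by rintro rfl; exact hn Nat.cast_zero
  rw [eval_rootCofactor_self]
  exact mul_ne_zero hn (pow_ne_zero _ (ne_zero_pow hn0 (ha ▸ one_ne_zero)))

theorem isCoprime_X_sub_C_rootCofactor (hn : (n : K) ≠ 0) (ha : a ^ n = 1) :
    IsCoprime (X - C a) (rootCofactor n a) := by
  rw [(irreducible_X_sub_C a).coprime_iff_not_dvd, dvd_iff_isRoot]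
  exact eval_rootCofactor_self_ne_zero hn ha

variable [DecidableEq K[X]] {H : K[X]}

theorem natDegree_gcd_X_pow_sub_one_eq_zero_iff (hn : n ≠ 0) (ha : a ^ n = 1) :
    (EuclideanDomain.gcd (X ^ n - 1) H).natDegree = 0 ↔
      IsCoprime (rootCofactor n a) H ∧ ¬ H.IsRoot a := by
  rw [natDegree_gcd_eq_zero_iff (X_pow_sub_one_ne_zero hn), ← X_sub_C_mul_rootCofactor ha,
    IsCoprime.mul_left_iff, (irreducible_X_sub_C a).coprime_iff_not_dvd, dvd_iff_isRoot, and_comm]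

theorem natDegree_gcd_X_pow_sub_one_eq_one_iff (hn : (n : K) ≠ 0) (ha : a ^ n = 1)
    (hH : H.IsRoot a) :
    (EuclideanDomain.gcd (X ^ n - 1) H).natDegree = 1 ↔ IsCoprime (rootCofactor n a) H := by
  have haM := isCoprime_X_sub_C_rootCofactor hn ha
  rw [← X_sub_C_mul_rootCofactor ha]
  set M := rootCofactor n a
  have hM : M ≠ 0 := fun h0 => not_isUnit_X_sub_C a (isCoprime_zero_right.mp (h0 ▸ haM))
  have hP : (X - C a) * M ≠ 0 := mul_ne_zero (X_sub_C_ne_zero a) hM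
  have haD : X - C a ∣ EuclideanDomain.gcd ((X - C a) * M) H :=
    X_sub_C_dvd_gcd (by simp) hH
  constructor
  · intro h1
    -- `X - a` and `gcd M H` are coprime divisors of the linear `gcd (X ^ n - 1) H`
    have hdvd : (X - C a) * EuclideanDomain.gcd M H ∣ EuclideanDomain.gcd ((X - C a) * M) H :=
      (haM.of_isCoprime_of_dvd_right (EuclideanDomain.gcd_dvd_left M H)).mul_dvd haD
        (EuclideanDomain.dvd_gcd ((EuclideanDomain.gcd_dvd_left M H).mul_left _)
          (EuclideanDomain.gcd_dvd_right M H))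
    have hle := natDegree_le_of_dvd hdvd fun h0 => hP (EuclideanDomain.gcd_eq_zero_iff.mp h0).1
    rw [natDegree_mul (X_sub_C_ne_zero a) fun h0 => hM (EuclideanDomain.gcd_eq_zero_iff.mp h0).1,
      natDegree_X_sub_C, h1] at hle
    exact (natDegree_gcd_eq_zero_iff hM).mp (by omega)
  · intro hMH
    have hDM : IsCoprime (EuclideanDomain.gcd ((X - C a) * M) H) M :=
      (hMH.of_isCoprime_of_dvd_right (EuclideanDomain.gcd_dvd_right _ H)).symm
    have hDa := hDM.dvd_of_dvd_mul_right (EuclideanDomain.gcd_dvd_left _ H)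
    have h1 := natDegree_le_of_dvd hDa (X_sub_C_ne_zero a)
    have h2 := natDegree_le_of_dvd haD fun h0 => hP (EuclideanDomain.gcd_eq_zero_iff.mp h0).1
    rw [natDegree_X_sub_C] at h1 h2
    omega

end RootCofactor

section OrbitPoly

variable {E : Type*} [Field E]

/-- The polynomial `g_α` of `α`, for the `q`-power Frobenius. -/
noncomputable def orbitPoly (q n : ℕ) (α : E) : E[X] :=
  ∑ i ∈ range n, C (α ^ q ^ i) * X ^ (n - 1 - i)

/-- `α` is `k`-normal iff this gcd has degree `k`. -/
noncomputable def orbitGcd [DecidableEq E[X]] (q n : ℕ) (α : E) : E[X] :=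
  EuclideanDomain.gcd (X ^ n - 1) (orbitPoly q n α)

theorem orbitPoly_eq_C_mul_rootCofactor {q n : ℕ} {a γ : E} (ha : a ^ q = a)
    (hγ : γ ^ q = a * γ) : orbitPoly q n γ = C γ * rootCofactor n a := by
  have hγi : ∀ i, γ ^ q ^ i = a ^ i * γ := by
    intro i
    induction i with
    | zero => simp
    | succ i ih => rw [pow_succ, pow_mul, ih, mul_pow, hγ, ← pow_mul, mul_comm i, pow_mul, ha,
        pow_succ, mul_assoc]
  simp only [orbitPoly, rootCofactor, mul_sum, hγi, C_mul, C_pow]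
  exact sum_congr rfl fun i _ => by ring

end OrbitPoly

section Frobenius

open FiniteField

variable {F : Type*} [Field F] [Fintype F] {E : Type*} [Field E] [Algebra F E] {n : ℕ}

local notation "q" => Fintype.card F

theorem frobeniusAlgHom_pow_apply (i : ℕ) (x : E) :
    (frobeniusAlgHom F E ^ i) x = x ^ q ^ i := by
  rw [AlgHom.coe_pow, coe_frobeniusAlgHom, pow_iterate]

variable (F) in
theorem natCast_pow_card (m : ℕ) : (m : E) ^ q = m :=
  map_natCast (frobeniusAlgHom F E) m

variable (E) in
theorem natCast_ne_zero_of_coprime {m : ℕ} (hm : m.Coprime q) : (m : E) ≠ 0 := by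
  have hq : (q : E) = 0 := by
    rw [← map_natCast (algebraMap F E), cast_card_eq_zero, map_zero]
  intro h0
  have := (Nat.isCoprime_iff_coprime.mpr hm).map (Int.castRingHom E)
  simp [h0, hq] at this

variable (F) in
theorem orbitPoly_add (α β : E) :
    orbitPoly q n (α + β) = orbitPoly q n α + orbitPoly q n β := by
  simp only [orbitPoly, ← frobeniusAlgHom_pow_apply, map_add, add_mul, sum_add_distrib]

variable (F) in
theorem eval_orbitPoly_pow_card {α a : E} (hα : α ^ q ^ n = α) (ha : a ^ n = 1) :
    (orbitPoly q n α).eval a ^ q = a ^ q * (orbitPoly q n α).eval (a ^ q) := by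
  set f : ℕ → E := fun j => α ^ q ^ j * (a ^ q) ^ (n - j)
  have hlhs : (orbitPoly q n α).eval a ^ q = ∑ i ∈ range n, f (i + 1) := by
    simp only [orbitPoly, eval_finsetSum, eval_mul, eval_C, eval_pow, eval_X, f]
    have hsum := map_sum (frobeniusAlgHom F E) (fun i => α ^ q ^ i * a ^ (n - 1 - i)) (range n)
    simp only [coe_frobeniusAlgHom] at hsum
    rw [hsum]
    refine sum_congr rfl fun i hi => ?_
    rw [mul_pow, ← pow_mul, ← pow_succ, ← pow_mul, ← pow_mul, mul_comm q,
      show n - 1 - i = n - (i + 1) by omega]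
  have hrhs : a ^ q * (orbitPoly q n α).eval (a ^ q) = ∑ i ∈ range n, f i := by
    simp only [orbitPoly, eval_finsetSum, eval_mul, eval_C, eval_pow, eval_X, f, mul_sum]
    refine sum_congr rfl fun i hi => ?_
    rw [mul_left_comm, ← pow_succ', show n - 1 - i + 1 = n - i by have := mem_range.mp hi; omega]
  -- the cyclic shift `i ↦ i + 1` of the summands fixes the sum, as `f n = α = f 0`
  have hfn : f n = f 0 := by
    simp only [f, Nat.sub_self, Nat.sub_zero, pow_zero, pow_one, mul_one, hα]
    rw [← pow_mul, mul_comm q n, pow_mul, ha, one_pow, mul_one]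
  rw [hlhs, hrhs, ← add_left_inj (f 0), ← sum_range_succ', sum_range_succ, hfn]

variable (F) in
theorem orbitPoly_add_of_pow_card_sub_one_eq {a γ : E} (haq : a ^ q = a) (hγ : γ ^ (q - 1) = a)
    (α : E) : orbitPoly q n (α + γ) = orbitPoly q n α + rootCofactor n a * C γ := by
  have hγq : γ ^ q = a * γ := by rw [← hγ, pow_sub_one_mul Fintype.card_ne_zero]
  rw [orbitPoly_add F, orbitPoly_eq_C_mul_rootCofactor haq hγq, mul_comm (C γ)]

variable (F) in
theorem eval_orbitPoly_add_of_pow_card_sub_one_eq {a γ : E} (haq : a ^ q = a)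
    (hγ : γ ^ (q - 1) = a) (α : E) :
    (orbitPoly q n (α + γ)).eval a = (orbitPoly q n α).eval a + (rootCofactor n a).eval a * γ := by
  rw [orbitPoly_add_of_pow_card_sub_one_eq F haq hγ, eval_add, eval_mul, eval_C]

theorem natDegree_orbitGcd_eq_one_and_isRoot_iff [DecidableEq E[X]] (hcop : Nat.Coprime n q)
    {a α : E} (ha : a ^ n = 1) :
    (orbitGcd q n α).natDegree = 1 ∧ (orbitPoly q n α).IsRoot a ↔
      IsCoprime (rootCofactor n a) (orbitPoly q n α) ∧ (orbitPoly q n α).IsRoot a :=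
  and_congr_left (natDegree_gcd_X_pow_sub_one_eq_one_iff (natCast_ne_zero_of_coprime E hcop) ha)

end Frobenius

section RootsOfUnity

open FiniteField

variable {K : Type*} [Field K] [Fintype K] {d : ℕ}

local notation "N" => Fintype.card K - 1

theorem FiniteField.card_sub_one_ne_zero : N ≠ 0 := by
  have := Fintype.one_lt_card (α := K)
  omega

theorem FiniteField.card_sub_one_div_ne_zero (hd : d ∣ N) : N / d ≠ 0 :=
  fun h => card_sub_one_ne_zero (Nat.eq_zero_of_dvd_of_div_eq_zero hd h)

theorem FiniteField.exists_isPrimitiveRoot_card_sub_one : ∃ ζ : K, IsPrimitiveRoot ζ N := by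
  obtain ⟨g, hg⟩ := IsCyclic.exists_ofOrder_eq_natCard (α := Kˣ)
  refine ⟨g, ?_⟩
  rw [IsPrimitiveRoot.coe_units_iff, IsPrimitiveRoot.iff_orderOf, hg, Nat.card_units,
    Nat.card_eq_fintype_card]

theorem FiniteField.exists_isPrimitiveRoot_of_dvd (hd : d ∣ N) :
    ∃ ζ : K, IsPrimitiveRoot ζ d := by
  obtain ⟨ζ, hζ⟩ := exists_isPrimitiveRoot_card_sub_one (K := K)
  have := hζ.pow_of_dvd (card_sub_one_div_ne_zero hd) (Nat.div_dvd_of_dvd hd)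
  rw [Nat.div_div_self hd card_sub_one_ne_zero] at this
  exact ⟨_, this⟩

theorem FiniteField.exists_pow_eq_of_pow_eq_one {y : K} (hd : d ∣ N) (hy : y ^ (N / d) = 1) :
    ∃ x : K, x ^ d = y := by
  obtain ⟨ζ, hζ⟩ := exists_isPrimitiveRoot_card_sub_one (K := K)
  have : NeZero N := ⟨card_sub_one_ne_zero⟩
  have hyN : y ^ N = 1 := by rw [← Nat.mul_div_cancel' hd, mul_comm, pow_mul, hy, one_pow]
  obtain ⟨k, -, rfl⟩ := hζ.eq_pow_of_pow_eq_one hyN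
  rw [← pow_mul, hζ.pow_eq_one_iff_dvd] at hy
  nth_rw 1 [← Nat.mul_div_cancel' hd] at hy
  obtain ⟨j, rfl⟩ :=
    Nat.dvd_of_mul_dvd_mul_right (Nat.pos_of_ne_zero (card_sub_one_div_ne_zero hd)) hy
  exact ⟨ζ ^ j, by rw [← pow_mul, mul_comm]⟩

theorem FiniteField.card_filter_pow_eq [DecidableEq K] {y : K} (hd : d ∣ N)
    (hy : y ^ (N / d) = 1) : #{x : K | x ^ d = y} = d := by
  obtain ⟨ζ, hζ⟩ := exists_isPrimitiveRoot_of_dvd hd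
  have hd0 : 0 < d := Nat.pos_of_dvd_of_pos hd (Nat.pos_of_ne_zero card_sub_one_ne_zero)
  have hy0 : y ≠ 0 := by
    rintro rfl
    rw [zero_pow (card_sub_one_div_ne_zero hd)] at hy
    exact zero_ne_one hy
  have hroots : ({x : K | x ^ d = y} : Finset K) = nthRootsFinset d y := by
    ext x
    simp [mem_nthRootsFinset hd0]
  rw [hroots, nthRootsFinset_def, Multiset.toFinset_card_of_nodup (hζ.nthRoots_nodup hy0),
    hζ.card_nthRoots, if_pos (exists_pow_eq_of_pow_eq_one hd hy)]

end RootsOfUnity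

section FiniteExtension

open FiniteField

variable {F : Type*} [Field F] [Fintype F] {E : Type*} [Field E] [Algebra F E] [Fintype E]

local notation "q" => Fintype.card F
local notation "n" => Module.finrank F E

theorem pow_card_pow_finrank (α : E) : α ^ q ^ n = α := by
  rw [← Module.card_eq_pow_finrank]
  exact pow_card α

theorem card_sub_one_dvd_card_sub_one : q - 1 ∣ Fintype.card E - 1 := by
  simpa [Module.card_eq_pow_finrank (K := F) (V := E)] using Nat.sub_dvd_pow_sub_pow q 1 n

theorem pow_finrank_eq_one_and_pow_card_eq_self_iff {a : E} :
    a ^ n = 1 ∧ a ^ q = a ↔ a ^ (q - 1).gcd n = 1 := by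
  rw [pow_gcd_eq_one, and_comm]
  refine and_congr_left fun ha => ⟨fun haq => ?_, fun haq => ?_⟩
  · have ha0 : a ≠ 0 := ne_zero_pow Module.finrank_pos.ne' (ha ▸ one_ne_zero)
    exact mul_right_cancel₀ ha0 (by rw [pow_sub_one_mul Fintype.card_ne_zero, haq, one_mul])
  · rw [← pow_sub_one_mul Fintype.card_ne_zero, haq, one_mul]

variable (E) in
theorem card_filter_pow_finrank_eq_one_and_pow_card_eq_self [DecidableEq E] :
    #{a : E | a ^ n = 1 ∧ a ^ q = a} = (q - 1).gcd n := by
  simp_rw [pow_finrank_eq_one_and_pow_card_eq_self_iff]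
  exact card_filter_pow_eq ((Nat.gcd_dvd_left _ _).trans card_sub_one_dvd_card_sub_one) (one_pow _)

theorem card_filter_pow_card_sub_one_eq [DecidableEq E] {a : E} (ha : a ^ n = 1)
    (haq : a ^ q = a) : #{γ : E | γ ^ (q - 1) = a} = q - 1 := by
  have haqi (i : ℕ) : a ^ q ^ i = a := by
    induction i with
    | zero => exact pow_one a
    | succ i ih => rw [pow_succ, pow_mul, ih, haq]
  refine card_filter_pow_eq card_sub_one_dvd_card_sub_one ?_
  rw [Module.card_eq_pow_finrank (K := F), ← Nat.geomSum_eq Fintype.one_lt_card,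
    ← prod_pow_eq_pow_sum]
  simp [haqi, ha]

theorem pow_card_sub_one_eval_orbitPoly_div (hcop : Nat.Coprime n q) {a α : E} (ha : a ^ n = 1)
    (haq : a ^ q = a) (hα : ¬ (orbitPoly q n α).IsRoot a) :
    ((orbitPoly q n α).eval a / (rootCofactor n a).eval a) ^ (q - 1) = a := by
  have hM := eval_rootCofactor_self_ne_zero (natCast_ne_zero_of_coprime E hcop) ha
  have hG : (orbitPoly q n α).eval a ^ q = a * (orbitPoly q n α).eval a := by
    rw [eval_orbitPoly_pow_card F (pow_card_pow_finrank α) ha, haq]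
  have hM' : (rootCofactor n a).eval a ^ q = (rootCofactor n a).eval a := by
    rw [eval_rootCofactor_self, mul_pow, natCast_pow_card F, ← pow_mul, mul_comm (n - 1),
      pow_mul, haq, mul_comm]
  refine mul_right_cancel₀ (div_ne_zero hα hM) ?_
  rw [pow_sub_one_mul Fintype.card_ne_zero, div_pow, hG, hM', mul_div_assoc]

variable [DecidableEq E[X]]

theorem natDegree_orbitGcd_eq_zero_iff {a α : E} (ha : a ^ n = 1) :
    (orbitGcd q n α).natDegree = 0 ↔
      IsCoprime (rootCofactor n a) (orbitPoly q n α) ∧ ¬ (orbitPoly q n α).IsRoot a :=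
  natDegree_gcd_X_pow_sub_one_eq_zero_iff Module.finrank_pos.ne' ha

theorem exists_root_of_natDegree_orbitGcd_eq_one {α : E} (h : (orbitGcd q n α).natDegree = 1) :
    ∃ a : E, a ^ n = 1 ∧ a ^ q = a ∧ (orbitPoly q n α).IsRoot a := by
  obtain ⟨a, hPa, hHa⟩ := exists_isRoot_of_natDegree_gcd_eq_one h
  have ha := isRoot_X_pow_sub_one.mp hPa
  have hPb : (X ^ n - 1 : E[X]).IsRoot (a ^ q) := by
    rw [isRoot_X_pow_sub_one, ← pow_mul, mul_comm, pow_mul, ha, one_pow]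
  have hHb : (orbitPoly q n α).IsRoot (a ^ q) := by
    have hfrob := eval_orbitPoly_pow_card F (pow_card_pow_finrank α) ha
    rw [hHa.eq_zero, zero_pow Fintype.card_ne_zero, eq_comm] at hfrob
    exact (mul_eq_zero.mp hfrob).resolve_left
      (pow_ne_zero _ (ne_zero_pow Module.finrank_pos.ne' (ha ▸ one_ne_zero)))
  exact ⟨a, ha, eq_of_isRoot_of_natDegree_gcd_eq_one
    (X_pow_sub_one_ne_zero Module.finrank_pos.ne') h hPb hHb hPa hHa, hHa⟩

theorem card_normal_eq_mul_card_oneNormal_isRoot [DecidableEq E] (hcop : Nat.Coprime n q) {a : E}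
    (ha : a ^ n = 1) (haq : a ^ q = a) :
    #{α : E | (orbitGcd q n α).natDegree = 0} =
      (q - 1) * #{α : E | (orbitGcd q n α).natDegree = 1 ∧ (orbitPoly q n α).IsRoot a} := by
  set M := rootCofactor n a
  have hM := eval_rootCofactor_self_ne_zero (natCast_ne_zero_of_coprime E hcop) ha
  have hne_zero {c : E} (hc : c ^ (q - 1) = a) : c ≠ 0 := by
    rintro rfl
    rw [zero_pow (Nat.sub_ne_zero_of_lt Fintype.one_lt_card)] at hc
    exact ne_zero_pow Module.finrank_pos.ne' (ha ▸ one_ne_zero) hc.symm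
  set γ : E → E := fun α => (orbitPoly q n α).eval a / M.eval a
  rw [← card_filter_pow_card_sub_one_eq ha haq, ← card_product]
  refine (card_nbij' (fun p => p.2 + p.1) (fun α => (γ α, α - γ α)) ?_ ?_ ?_ ?_).symm
  · rintro ⟨c, α⟩ hp
    simp only [mem_coe, mem_product, mem_filter, mem_univ, true_and,
      natDegree_orbitGcd_eq_one_and_isRoot_iff hcop ha, natDegree_orbitGcd_eq_zero_iff ha] at hp ⊢
    rw [orbitPoly_add_of_pow_card_sub_one_eq F haq hp.1, IsCoprime.add_mul_left_right_iff,
      IsRoot, eval_add, hp.2.2.eq_zero, eval_mul, eval_C, zero_add]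
    exact ⟨hp.2.1, mul_ne_zero hM (hne_zero hp.1)⟩
  · intro α hα
    simp only [mem_coe, mem_product, mem_filter, mem_univ, true_and,
      natDegree_orbitGcd_eq_one_and_isRoot_iff hcop ha, natDegree_orbitGcd_eq_zero_iff ha]
      at hα ⊢
    have hγ := pow_card_sub_one_eval_orbitPoly_div hcop ha haq hα.2
    have hshift : orbitPoly q n α = orbitPoly q n (α - γ α) + M * C (γ α) := by
      rw [← orbitPoly_add_of_pow_card_sub_one_eq F haq hγ, sub_add_cancel]
    refine ⟨hγ, ?_, ?_⟩
    · exact IsCoprime.add_mul_left_right_iff.mp (hshift ▸ hα.1)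
    · have := congrArg (eval a) hshift
      rw [eval_add, eval_mul, eval_C, mul_div_cancel₀ _ hM] at this
      exact add_eq_right.mp this.symm
  · rintro ⟨c, α⟩ hp
    simp only [mem_coe, mem_product, mem_filter, mem_univ, true_and] at hp
    have hc : γ (α + c) = c := by
      simp only [γ]
      rw [eval_orbitPoly_add_of_pow_card_sub_one_eq F haq hp.1, hp.2.2.eq_zero, zero_add,
        mul_div_cancel_left₀ _ hM]
    simp only [hc, add_sub_cancel_right]
  · intro α _
    simp only [sub_add_cancel]

theorem card_sub_one_mul_card_oneNormal [DecidableEq E] (hcop : Nat.Coprime n q) :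
    (q - 1) * #{α : E | (orbitGcd q n α).natDegree = 1} =
      (q - 1).gcd n * #{α : E | (orbitGcd q n α).natDegree = 0} := by
  set roots : Finset E := {a : E | a ^ n = 1 ∧ a ^ q = a}
  set fiber : E → Finset E :=
    fun a => {α : E | (orbitGcd q n α).natDegree = 1 ∧ (orbitPoly q n α).IsRoot a}
  have hpartition :
      ({α : E | (orbitGcd q n α).natDegree = 1} : Finset E) = roots.biUnion fiber := by
    ext α
    simp only [roots, fiber, mem_biUnion, mem_filter, mem_univ, true_and]
    refine ⟨fun h => ?_, fun ⟨_, _, h, _⟩ => h⟩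
    obtain ⟨a, ha, haq, hroot⟩ := exists_root_of_natDegree_orbitGcd_eq_one h
    exact ⟨a, ⟨ha, haq⟩, h, hroot⟩
  have hdisjoint : (roots : Set E).PairwiseDisjoint fiber := by
    intro a ha b hb hab
    simp only [roots, mem_coe, mem_filter, mem_univ, true_and] at ha hb
    refine disjoint_left.mpr fun α hαa hαb => hab ?_
    simp only [fiber, mem_filter, mem_univ, true_and] at hαa hαb
    exact eq_of_isRoot_of_natDegree_gcd_eq_one (X_pow_sub_one_ne_zero Module.finrank_pos.ne')
      hαa.1 (isRoot_X_pow_sub_one.mpr ha.1) hαa.2 (isRoot_X_pow_sub_one.mpr hb.1) hαb.2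
  rw [hpartition, card_biUnion hdisjoint, mul_sum,
    sum_congr rfl fun a ha => (card_normal_eq_mul_card_oneNormal_isRoot hcop (mem_filter.mp ha).2.1
      (mem_filter.mp ha).2.2).symm, sum_const, smul_eq_mul,
    card_filter_pow_finrank_eq_one_and_pow_card_eq_self E]

end FiniteExtension

theorem stmt15_general (F E : Type*) [Field F] [Field E] [Algebra F E] [Fintype F] [Fintype E]
    [DecidableEq E[X]] (q n : ℕ)
    (hq : Fintype.card F = q) (hfin : Module.finrank F E = n)
    (hcop : Nat.Coprime n q) :
    (({α : E | (EuclideanDomain.gcd ((X : E[X]) ^ n - 1)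
        (∑ i ∈ Finset.range n, C (α ^ q ^ i) * X ^ (n - 1 - i))).natDegree = 1}).ncard : ℚ) =
      ((Nat.gcd (q - 1) n : ℚ) / ((q : ℚ) - 1)) *
      (({α : E | (EuclideanDomain.gcd ((X : E[X]) ^ n - 1)
        (∑ i ∈ Finset.range n, C (α ^ q ^ i) * X ^ (n - 1 - i))).natDegree = 0}).ncard : ℚ) := by
  classical
  subst hq hfin
  have hcount := congrArg (Nat.cast : ℕ → ℚ) (card_sub_one_mul_card_oneNormal (E := E) hcop)
  have hq : (Fintype.card F : ℚ) - 1 ≠ 0 :=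
    sub_ne_zero.mpr (mod_cast Fintype.one_lt_card.ne')
  push_cast [Nat.cast_sub Fintype.card_pos] at hcount
  change ({α : E | (orbitGcd _ _ α).natDegree = 1}.ncard : ℚ) =
    _ * ({α : E | (orbitGcd _ _ α).natDegree = 0}.ncard : ℚ)
  rw [← coe_filter_univ, ← coe_filter_univ, Set.ncard_coe_finset, Set.ncard_coe_finset,
    div_mul_eq_mul_div, eq_div_iff hq]
  linear_combination hcount

/-- For `gcd(n, q) = 1`, `N₁ = (v₁ / (q - 1)) * N₀` where `v₁ = gcd(q - 1, n)`. -/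
theorem stmt15 (F E : Type*) [Field F] [Field E] [Algebra F E] [Fintype F] [Fintype E]
    [DecidableEq E[X]] (q n : ℕ)
    (hq : Fintype.card F = q) (hfin : Module.finrank F E = n) (hn : 0 < n)
    (hcop : Nat.Coprime n q) :
    (({α : E | (EuclideanDomain.gcd ((X : E[X]) ^ n - 1)
        (∑ i ∈ Finset.range n, C (α ^ q ^ i) * X ^ (n - 1 - i))).natDegree = 1}).ncard : ℚ) =
      ((Nat.gcd (q - 1) n : ℚ) / ((q : ℚ) - 1)) *
      (({α : E | (EuclideanDomain.gcd ((X : E[X]) ^ n - 1)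
        (∑ i ∈ Finset.range n, C (α ^ q ^ i) * X ^ (n - 1 - i))).natDegree = 0}).ncard : ℚ) :=
  stmt15_general F E q n hq hfin hcop
end
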